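/- arXiv:2508.03632 — 4 statements merged into one kernel-verified Lean document; each statement's English description precedes it below -/
import Mathlib

section
/- Let S be an inverse semigroup with a zero element 0 such that Z(S)× has at least two elements. Then the zero-divisor graph Γ(S) is connected, and diam(Γ(S)) ∈ {1, 2, 3}. -/
namespace ZDG

variable {S : Type*} [Semigroup S]

/-- The natural partial order on an inverse semigroup: `a ≤ b` iff `a = e * b`
for some idempotent `e`. -/
def nle (a b : S) : Prop := ∃ e : S, e * e = e ∧ a = e * b

/-- `omg a b` is the set `ω(a,b)` of common lower bounds of `a` and `b` with respect
to the natural partial order. -/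
def omg (a b : S) : Set S := {c | nle c a ∧ nle c b}

lemma omg_comm (a b : S) : omg a b = omg b a := by
  ext c; exact and_comm

/-- `Zx z` is the set `Z(S)×` of nonzero zero-divisors of `S` (with zero element `z`). -/
def Zx (z : S) : Set S := {a | a ≠ z ∧ ∃ b : S, b ≠ z ∧ omg a b = {z}}

/-- The zero-divisor graph `Γ(S)`: vertices are the elements of `Z(S)×`, and two
distinct vertices `a`, `b` are adjacent iff `ω(a,b) = {z}`. -/
def ZDGraph (z : S) : SimpleGraph (Zx z) where
  Adj a b := (a : S) ≠ (b : S) ∧ omg (a : S) (b : S) = {z}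
  symm := by
    constructor
    rintro a b ⟨h1, h2⟩
    exact ⟨fun h => h1 h.symm, (omg_comm (b : S) (a : S)).trans h2⟩
  loopless := by constructor; rintro a ⟨h1, -⟩; exact h1 rfl

/-- The set of minimal elements of `S \ {z}` with respect to the natural partial order. -/
def MinOf (z : S) : Set S := {x | x ≠ z ∧ ∀ y : S, y ≠ z → nle y x → y = x}

/-- The annihilator of `x`: the set of `y` with `ω(x,y) = {z}`. -/
def Ann (z : S) (x : S) : Set S := {y | omg x y = {z}}

end ZDG

open ZDG

section Aux

variable {S : Type*} [Semigroup S]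

lemma nle_refl (hinv : ∀ a : S, ∃ b : S, a * b * a = a ∧ b * a * b = b) (a : S) :
    nle a a := by
  obtain ⟨b, hb1, -⟩ := hinv a
  refine ⟨a * b, ?_, ?_⟩
  · calc a * b * (a * b) = (a * b * a) * b := (mul_assoc (a*b) a b).symm
    _ = a * b := by rw [hb1]
  · rw [hb1]

lemma nle_trans (hcomm : ∀ e f : S, e * e = e → f * f = f → e * f = f * e)
    {a b c : S} (hab : nle a b) (hbc : nle b c) : nle a c := by
  obtain ⟨e, he, hae⟩ := hab
  obtain ⟨f, hf, hbf⟩ := hbc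
  refine ⟨e * f, ?_, ?_⟩
  · calc e * f * (e * f) = e * (f * e) * f := by simp [mul_assoc]
    _ = e * (e * f) * f := by rw [hcomm e f he hf]
    _ = (e * e) * (f * f) := by simp [mul_assoc]
    _ = e * f := by rw [he, hf]
  · rw [mul_assoc, ← hbf, hae]

lemma zero_nle (z : S) (hz : ∀ x : S, z * x = z ∧ x * z = z) (b : S) : nle z b :=
  ⟨z, (hz z).1, (hz b).1.symm⟩

lemma zero_mem_omg (z : S) (hz : ∀ x : S, z * x = z ∧ x * z = z) (a b : S) :
    z ∈ omg a b := ⟨zero_nle z hz a, zero_nle z hz b⟩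

/-- If `omg a b ≠ {z}` then there is a nonzero common lower bound. -/
lemma exists_ne_of_omg_ne (z : S) (hz : ∀ x : S, z * x = z ∧ x * z = z) {a b : S}
    (h : omg a b ≠ {z}) : ∃ u, u ∈ omg a b ∧ u ≠ z := by
  by_contra hc
  push_neg at hc
  apply h
  apply Set.eq_singleton_iff_unique_mem.mpr
  exact ⟨zero_mem_omg z hz a b, hc⟩

lemma omg_eq_singleton_of_subset (z : S) (hz : ∀ x : S, z * x = z ∧ x * z = z)
    {a b : S} (h : ∀ c, c ∈ omg a b → c = z) : omg a b = {z} :=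
  Set.eq_singleton_iff_unique_mem.mpr ⟨zero_mem_omg z hz a b, h⟩

end Aux

theorem stmt3 {S : Type*} [Semigroup S]
    (hinv : ∀ a : S, ∃ b : S, a * b * a = a ∧ b * a * b = b)
    (hcomm : ∀ e f : S, e * e = e → f * f = f → e * f = f * e)
    (z : S) (hz : ∀ x : S, z * x = z ∧ x * z = z)
    (h2 : (Zx z).Nontrivial) :
    (ZDGraph z).Connected ∧ (ZDGraph z).ediam ∈ ({1, 2, 3} : Set ℕ∞) := by
  have hrefl := nle_refl hinv
  have htrans := @nle_trans S _ hcomm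
  -- key lemma: short walk between any two distinct vertices
  have key : ∀ a b : (Zx z : Set S), a ≠ b →
      ∃ w : (ZDGraph z).Walk a b, w.length ≤ 3 := by
    intro a b hab
    have hcoe : (a : S) ≠ (b : S) := fun h => hab (Subtype.ext h)
    obtain ⟨ha0, x, hx0, hax⟩ := a.2
    obtain ⟨hb0, y, hy0, hby⟩ := b.2
    by_cases h1 : omg (a : S) (b : S) = {z}
    · exact ⟨SimpleGraph.Walk.cons ⟨hcoe, h1⟩ SimpleGraph.Walk.nil, Nat.le_of_ble_eq_true rfl⟩
    · -- vertex versions of x, y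
      have hxZ : x ∈ Zx z := ⟨hx0, a, ha0, (omg_comm x (a : S)).trans hax⟩
      have hyZ : y ∈ Zx z := ⟨hy0, b, hb0, (omg_comm y (b : S)).trans hby⟩
      have hax' : (a : S) ≠ x := by
        intro h
        have : (a : S) ∈ omg (a : S) x := ⟨hrefl a, h ▸ hrefl a⟩
        rw [hax] at this
        exact ha0 this
      have hby' : (b : S) ≠ y := by
        intro h
        have : (b : S) ∈ omg (b : S) y := ⟨hrefl b, h ▸ hrefl b⟩
        rw [hby] at this
        exact hb0 this
      by_cases h2a : omg x (b : S) = {z}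
      · -- path a - x - b
        have hxb : x ≠ (b : S) := by
          intro h
          exact h1 (h ▸ hax)
        refine ⟨SimpleGraph.Walk.cons (v := ⟨x, hxZ⟩) ⟨hax', hax⟩
          (SimpleGraph.Walk.cons ⟨hxb, h2a⟩ SimpleGraph.Walk.nil), Nat.le_of_ble_eq_true rfl⟩
      · by_cases h2b : omg (a : S) y = {z}
        · -- path a - y - b
          have hay : (a : S) ≠ y := by
            intro h
            exact h1 (h ▸ ((omg_comm y (b : S)).trans hby))
          have hyb : y ≠ (b : S) := fun h => hby' h.symm
          refine ⟨SimpleGraph.Walk.cons (v := ⟨y, hyZ⟩) ⟨hay, h2b⟩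
            (SimpleGraph.Walk.cons ⟨hyb, (omg_comm y (b : S)).trans hby⟩
              SimpleGraph.Walk.nil), Nat.le_of_ble_eq_true rfl⟩
        · -- path a - u - v - b
          obtain ⟨u, ⟨hux, hub⟩, hu0⟩ := exists_ne_of_omg_ne z hz h2a
          obtain ⟨v, ⟨hva, hvy⟩, hv0⟩ := exists_ne_of_omg_ne z hz h2b
          have hau : omg (a : S) u = {z} := by
            apply omg_eq_singleton_of_subset z hz
            rintro c ⟨hca, hcu⟩
            have : c ∈ omg (a : S) x := ⟨hca, htrans hcu hux⟩
            rw [hax] at this; exact this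
          have huv : omg u v = {z} := by
            apply omg_eq_singleton_of_subset z hz
            rintro c ⟨hcu, hcv⟩
            have : c ∈ omg (a : S) x := ⟨htrans hcv hva, htrans hcu hux⟩
            rw [hax] at this; exact this
          have hvb : omg v (b : S) = {z} := by
            apply omg_eq_singleton_of_subset z hz
            rintro c ⟨hcv, hcb⟩
            have : c ∈ omg (b : S) y := ⟨hcb, htrans hcv hvy⟩
            rw [hby] at this; exact this
          have huZ : u ∈ Zx z := ⟨hu0, a, ha0, (omg_comm u (a : S)).trans hau⟩
          have hvZ : v ∈ Zx z := ⟨hv0, b, hb0, hvb⟩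
          have hau' : (a : S) ≠ u := by
            intro h
            have : (a : S) ∈ omg (a : S) u := ⟨hrefl a, h ▸ hrefl a⟩
            rw [hau] at this; exact ha0 this
          have huv' : u ≠ v := by
            intro h
            have : u ∈ omg u v := ⟨hrefl u, h ▸ hrefl u⟩
            rw [huv] at this; exact hu0 this
          have hvb' : v ≠ (b : S) := by
            intro h
            have : v ∈ omg v (b : S) := ⟨hrefl v, h ▸ hrefl v⟩
            rw [hvb] at this; exact hv0 this
          refine ⟨SimpleGraph.Walk.cons (v := ⟨u, huZ⟩) ⟨hau', hau⟩
            (SimpleGraph.Walk.cons (v := ⟨v, hvZ⟩) ⟨huv', huv⟩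
              (SimpleGraph.Walk.cons ⟨hvb', hvb⟩ SimpleGraph.Walk.nil)), Nat.le_of_ble_eq_true rfl⟩
  have hnt : Nontrivial (Zx z : Set S) := h2.coe_sort
  have hconn : (ZDGraph z).Connected := by
    haveI : Nonempty (Zx z : Set S) := hnt.to_nonempty
    refine SimpleGraph.Connected.mk fun a b => ?_
    rcases eq_or_ne a b with rfl | hab
    · exact SimpleGraph.Reachable.refl a
    · obtain ⟨w, -⟩ := key a b hab
      exact ⟨w⟩
  refine ⟨hconn, ?_⟩
  have hle : (ZDGraph z).ediam ≤ 3 := by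
    apply SimpleGraph.ediam_le_of_edist_le
    intro u v
    rcases eq_or_ne u v with rfl | huv
    · simp [SimpleGraph.edist_self]
    · obtain ⟨w, hw⟩ := key u v huv
      calc (ZDGraph z).edist u v ≤ w.length := SimpleGraph.edist_le w
      _ ≤ 3 := by exact_mod_cast hw
  have hge : (ZDGraph z).ediam ≠ 0 := SimpleGraph.ediam_ne_zero
  -- conclude membership
  set d := (ZDGraph z).ediam with hd
  have hdne : d ≠ ⊤ := fun h => by simp [h] at hle
  lift d to ℕ using hdne with n hn
  have h3 : n ≤ 3 := by exact_mod_cast hle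
  have h1 : n ≠ 0 := by exact_mod_cast hge
  interval_cases n <;> simp_all
end

section
/- Let S be an inverse semigroup with a zero element 0 such that Z(S)× has at least two elements. Then diam(Γ(S)) = 2 if and only if Z(S)× \ Min(S×) ≠ ∅ and Ann(x) ∩ Ann(y) ≠ {0} for all x, y ∈ Z(S)× \ Min(S×) with ω(x,y) ≠ {0}. -/
open ZDG

private lemma enat_eq_two {n : ℕ∞} (h2 : n ≤ 2) (h0 : n ≠ 0) (h1 : n ≠ 1) : n = 2 := by
  cases n with
  | top => exact absurd h2 (by simp)
  | coe m =>
    have hm : m ≤ 2 := by exact_mod_cast h2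
    have hm0 : m ≠ 0 := by exact_mod_cast h0
    have hm1 : m ≠ 1 := by exact_mod_cast h1
    have : m = 2 := by omega
    exact_mod_cast this

/-- `diam(Γ(S)) = 2` iff `Z(S)× \ Min(S×) ≠ ∅` and
`Ann(x) ∩ Ann(y) ≠ {z}` for all `x, y ∈ Z(S)× \ Min(S×)` with `ω(x,y) ≠ {z}`. -/
theorem stmt5 {S : Type*} [Semigroup S] [Nontrivial S]
    (hinv : ∀ a : S, ∃ b : S, a * b * a = a ∧ b * a * b = b)
    (hcomm : ∀ e f : S, e * e = e → f * f = f → e * f = f * e)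
    (z : S) (hz : ∀ x : S, z * x = z ∧ x * z = z)
    (h2 : (Zx z).Nontrivial) :
    (ZDGraph z).ediam = 2 ↔
      (Zx z \ MinOf z).Nonempty ∧
        ∀ x ∈ Zx z \ MinOf z, ∀ y ∈ Zx z \ MinOf z,
          omg x y ≠ {z} → Ann z x ∩ Ann z y ≠ {z} := by
  classical
  -- basic facts about the natural partial order
  have hrefl : ∀ a : S, nle a a := by
    intro a
    obtain ⟨b, hb, -⟩ := hinv a
    exact ⟨a * b, by rw [← mul_assoc, hb], hb.symm⟩
  have htrans : ∀ {a b c : S}, nle a b → nle b c → nle a c := by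
    rintro a b c ⟨e, he, rfl⟩ ⟨f, hf, rfl⟩
    refine ⟨e * f, ?_, by rw [mul_assoc]⟩
    calc e * f * (e * f) = e * (f * (e * f)) := by rw [mul_assoc]
      _ = e * (f * e * f) := by rw [mul_assoc f e f]
      _ = e * (e * f * f) := by rw [hcomm f e hf he]
      _ = e * (e * (f * f)) := by rw [mul_assoc e f f]
      _ = e * (e * f) := by rw [hf]
      _ = e * e * f := by rw [mul_assoc]
      _ = e * f := by rw [he]
  have hz_nle : ∀ b : S, nle z b := fun b => ⟨z, (hz z).1, ((hz b).1).symm⟩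
  have hnle_z : ∀ c : S, nle c z → c = z := by
    rintro c ⟨e, -, rfl⟩; exact (hz e).2
  have hzmem : ∀ a b : S, z ∈ omg a b := fun a b => ⟨hz_nle a, hz_nle b⟩
  have homg_eq : ∀ {a b : S}, omg a b ⊆ {z} → omg a b = {z} := fun {a b} h =>
    Set.Subset.antisymm h (Set.singleton_subset_iff.mpr (hzmem a b))
  have hex_ne : ∀ {a b : S}, omg a b ≠ {z} → ∃ c ∈ omg a b, c ≠ z := by
    intro a b h
    by_contra hc
    push_neg at hc
    exact h (homg_eq fun c hcm => hc c hcm)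
  have homg_z : ∀ a : S, omg a z = {z} := fun a =>
    homg_eq fun c hc => hnle_z c hc.2
  -- adjacency and distance facts
  set G := ZDGraph z with hG
  have hadj : ∀ u v : Zx z, G.Adj u v ↔ (u : S) ≠ (v : S) ∧ omg (u : S) (v : S) = {z} :=
    fun u v => Iff.rfl
  -- distinct minimal vertices are adjacent
  have hminadj : ∀ u v : Zx z, (u : S) ∈ MinOf z → (v : S) ∈ MinOf z → u ≠ v → G.Adj u v := by
    intro u v hu hv huv
    have hne : (u : S) ≠ (v : S) := fun h => huv (Subtype.ext h)
    refine ⟨hne, homg_eq ?_⟩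
    intro c hc
    by_contra hcz
    have hcz' : c ≠ z := fun h => hcz h
    have h1 := hu.2 c hcz' hc.1
    have h2 := hv.2 c hcz' hc.2
    exact hne (h1 ▸ h2 ▸ rfl)
  -- edist of a pair joined through a common neighbour is ≤ 2
  have hdle2 : ∀ u v w : Zx z, G.Adj u w → G.Adj w v → G.edist u v ≤ 2 := by
    intro u v w h1 h2
    have := (SimpleGraph.Walk.cons h1 (SimpleGraph.Walk.cons h2 SimpleGraph.Walk.nil)).edist_le
    simpa using this
  have hnonadj_two : ∀ u v : Zx z, u ≠ v → ¬ G.Adj u v → G.edist u v ≤ 2 → G.edist u v = 2 := by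
    intro u v huv hna hle
    refine enat_eq_two hle ?_ ?_
    · exact fun h => huv (SimpleGraph.edist_eq_zero_iff.mp h)
    · exact fun h => hna (SimpleGraph.edist_eq_one_iff_adj.mp h)
  constructor
  · -- forward direction
    intro hdiam
    have hle2 : ∀ u v : Zx z, G.edist u v ≤ 2 := by
      intro u v
      calc G.edist u v ≤ G.ediam := SimpleGraph.edist_le_ediam
        _ = 2 := hdiam
    constructor
    · -- some vertex is non-minimal
      by_contra hmin
      push_neg at hmin
      rw [Set.diff_eq_empty] at hmin
      have : G.ediam ≤ 1 := by
        rw [SimpleGraph.ediam_le_iff]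
        intro u v
        by_cases huv : u = v
        · subst huv; simp [SimpleGraph.edist_self]
        · have := hminadj u v (hmin u.2) (hmin v.2) huv
          rw [← SimpleGraph.edist_eq_one_iff_adj] at this
          exact this.le
      rw [hdiam] at this
      exact absurd this (by norm_num)
    · intro x hx y hy hxy
      have hxZ := hx.1
      have hyZ := hy.1
      by_cases hxyeq : x = y
      · subst hxyeq
        obtain ⟨b, hbz, hb⟩ := hxZ.2
        intro hcon
        have : b ∈ Ann z x ∩ Ann z x := ⟨hb, hb⟩
        rw [hcon] at this
        exact hbz this
      · -- distinct, non-adjacent vertices: use diameter 2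
        obtain ⟨u, hux⟩ : ∃ u : Zx z, (u : S) = x := ⟨⟨x, hxZ⟩, rfl⟩
        obtain ⟨v, hvy⟩ : ∃ v : Zx z, (v : S) = y := ⟨⟨y, hyZ⟩, rfl⟩
        have huv : u ≠ v := fun h => hxyeq (hux ▸ hvy ▸ congrArg Subtype.val h)
        have hna : ¬ G.Adj u v := fun h => hxy (hux ▸ hvy ▸ h.2)
        have hd2 : G.edist u v = 2 := hnonadj_two u v huv hna (hle2 u v)
        obtain ⟨p, hp⟩ := SimpleGraph.exists_walk_of_edist_eq_coe (k := 2) (by exact_mod_cast hd2)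
        -- extract the middle vertex
        cases p with
        | nil => simp at hp
        | @cons _ m _ h1 q =>
          cases q with
          | nil => simp at hp
          | cons h2 r =>
            have hr : r.length = 0 := by simp only [SimpleGraph.Walk.length_cons] at hp; omega
            have hwv : _ = v := SimpleGraph.Walk.eq_of_length_eq_zero hr
            subst hwv
            intro hcon
            have hm1 : (m : S) ∈ Ann z x := by
              show omg x (m : S) = {z}
              rw [← hux]
              exact h1.2
            have hm2 : (m : S) ∈ Ann z y := by
              show omg y (m : S) = {z}
              rw [← hvy]
              exact (omg_comm _ _).trans h2.2
            have hwmem : (m : S) ∈ Ann z x ∩ Ann z y := ⟨hm1, hm2⟩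
            rw [hcon] at hwmem
            exact m.2.1 hwmem
  · -- backward direction
    rintro ⟨⟨x0, hx0⟩, hann⟩
    -- every pair of vertices is within distance 2
    have hall : ∀ u v : Zx z, G.edist u v ≤ 2 := by
      intro u v
      by_cases huv : u = v
      · subst huv; simp [SimpleGraph.edist_self]
      have hne : (u : S) ≠ (v : S) := fun h => huv (Subtype.ext h)
      by_cases hadj' : G.Adj u v
      · rw [← SimpleGraph.edist_eq_one_iff_adj] at hadj'
        rw [hadj']; norm_num
      have homgne : omg (u : S) (v : S) ≠ {z} := fun h => hadj' ⟨hne, h⟩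
      by_cases hmu : (u : S) ∈ MinOf z
      · by_cases hmv : (v : S) ∈ MinOf z
        · exact absurd (hminadj u v hmu hmv huv) hadj'
        · -- u minimal, v not minimal : u ≤ v, take b with ω(v,b) = {z}
          obtain ⟨c, hc, hcz⟩ := hex_ne homgne
          have hcu : c = (u : S) := hmu.2 c hcz hc.1
          have huvle : nle (u : S) (v : S) := hcu ▸ hc.2
          obtain ⟨b, hbz, hb⟩ := v.2.2
          have hub : omg (u : S) b = {z} := homg_eq (by
            intro d hd
            have : d ∈ omg (v : S) b := ⟨htrans hd.1 huvle, hd.2⟩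
            rw [hb] at this; exact this)
          have hbZ : b ∈ Zx z := ⟨hbz, v, v.2.1, (omg_comm _ _).trans hb⟩
          have hbu : b ≠ (u : S) := by
            intro h
            rw [h] at hb
            have : (u : S) ∈ omg (v : S) (u : S) := ⟨huvle, hrefl _⟩
            rw [hb] at this
            exact u.2.1 this
          have hbv : b ≠ (v : S) := by
            intro h
            have : (v : S) ∈ omg (v : S) b := ⟨hrefl _, h ▸ hrefl b⟩
            rw [hb] at this
            exact v.2.1 this
          have hA1 : G.Adj u ⟨b, hbZ⟩ := ⟨fun h => hbu h.symm, hub⟩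
          have hA2 : G.Adj ⟨b, hbZ⟩ v := ⟨hbv, (omg_comm _ _).trans hb⟩
          exact hdle2 u v ⟨b, hbZ⟩ hA1 hA2
      · by_cases hmv : (v : S) ∈ MinOf z
        · -- symmetric case
          obtain ⟨c, hc, hcz⟩ := hex_ne homgne
          have hcv : c = (v : S) := hmv.2 c hcz hc.2
          have hvule : nle (v : S) (u : S) := hcv ▸ hc.1
          obtain ⟨b, hbz, hb⟩ := u.2.2
          have hvb : omg (v : S) b = {z} := homg_eq (by
            intro d hd
            have : d ∈ omg (u : S) b := ⟨htrans hd.1 hvule, hd.2⟩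
            rw [hb] at this; exact this)
          have hbZ : b ∈ Zx z := ⟨hbz, u, u.2.1, (omg_comm _ _).trans hb⟩
          have hbv : b ≠ (v : S) := by
            intro h
            rw [h] at hb
            have : (v : S) ∈ omg (u : S) (v : S) := ⟨hvule, hrefl _⟩
            rw [hb] at this
            exact v.2.1 this
          have hbu : b ≠ (u : S) := by
            intro h
            have : (u : S) ∈ omg (u : S) b := ⟨hrefl _, h ▸ hrefl b⟩
            rw [hb] at this
            exact u.2.1 this
          have hA1 : G.Adj u ⟨b, hbZ⟩ := ⟨fun h => hbu h.symm, hb⟩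
          have hA2 : G.Adj ⟨b, hbZ⟩ v := ⟨hbv, (omg_comm _ _).trans hvb⟩
          exact hdle2 u v ⟨b, hbZ⟩ hA1 hA2
        · -- both non-minimal
          have h := hann (u : S) ⟨u.2, hmu⟩ (v : S) ⟨v.2, hmv⟩ homgne
          have hsub : {z} ⊆ Ann z (u : S) ∩ Ann z (v : S) := by
            intro c hc
            rw [Set.mem_singleton_iff] at hc
            subst hc
            exact ⟨homg_z _, homg_z _⟩
          obtain ⟨w, hw, hwz⟩ : ∃ w ∈ Ann z (u : S) ∩ Ann z (v : S), w ≠ z := by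
            by_contra hcon
            push_neg at hcon
            exact h (Set.Subset.antisymm (fun c hc => hcon c hc) hsub)
          have hwZ : w ∈ Zx z := ⟨hwz, u, u.2.1, (omg_comm _ _).trans hw.1⟩
          have hwu : w ≠ (u : S) := by
            intro hh
            have : (u : S) ∈ omg (u : S) w := ⟨hrefl _, hh ▸ hrefl w⟩
            rw [hw.1] at this
            exact u.2.1 this
          have hwv : w ≠ (v : S) := by
            intro hh
            have : (v : S) ∈ omg (v : S) w := ⟨hrefl _, hh ▸ hrefl w⟩
            rw [hw.2] at this
            exact v.2.1 this
          have hA1 : G.Adj u ⟨w, hwZ⟩ := ⟨fun hh => hwu hh.symm, hw.1⟩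
          have hA2 : G.Adj ⟨w, hwZ⟩ v := ⟨hwv, (omg_comm _ _).trans hw.2⟩
          exact hdle2 u v ⟨w, hwZ⟩ hA1 hA2
    -- exhibit a pair at distance exactly 2
    have hx0Z := hx0.1
    have hx0min := hx0.2
    have : ∃ y : S, y ≠ z ∧ nle y x0 ∧ y ≠ x0 := by
      by_contra hcon
      push_neg at hcon
      exact hx0min ⟨hx0Z.1, fun y hy hle => hcon y hy hle⟩
    obtain ⟨y, hyz, hyle, hyne⟩ := this
    obtain ⟨b, hbz, hb⟩ := hx0Z.2
    have hyZ : y ∈ Zx z := by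
      refine ⟨hyz, b, hbz, homg_eq ?_⟩
      intro d hd
      have : d ∈ omg x0 b := ⟨htrans hd.1 hyle, hd.2⟩
      rw [hb] at this; exact this
    set u : Zx z := ⟨x0, hx0Z⟩
    set v : Zx z := ⟨y, hyZ⟩
    have huv : u ≠ v := fun h => hyne (congrArg Subtype.val h).symm
    have hna : ¬ G.Adj u v := by
      rintro ⟨-, hom⟩
      have : y ∈ omg x0 y := ⟨hyle, hrefl y⟩
      rw [hom] at this
      exact hyz this
    have hd2 : G.edist u v = 2 := hnonadj_two u v huv hna (hall u v)
    refine le_antisymm (SimpleGraph.ediam_le_iff.mpr hall) ?_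
    rw [← hd2]
    exact SimpleGraph.edist_le_ediam
end

section
/- Let S be an inverse semigroup without zero element and let S⁰ be S with an external zero adjoined. Then diam(Γ(S⁰)) = 1 if and only if |S| > 1 and σ is the identity relation on S. -/
open ZDG

namespace ZDG

/-- The least group congruence `σ` on an inverse semigroup: `a σ b` iff `e*a = f*b`
for some idempotents `e`, `f`. -/
def sigmaRel {S : Type*} [Semigroup S] (a b : S) : Prop :=
  ∃ e f : S, e * e = e ∧ f * f = f ∧ e * a = f * b

end ZDG

namespace ZDG

variable {S : Type*} [Semigroup S]

lemma zero_nle' (a : WithZero S) : nle (0 : WithZero S) a :=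
  ⟨0, by simp, by simp⟩

lemma zero_mem_omg' (a b : WithZero S) : (0 : WithZero S) ∈ omg a b :=
  ⟨zero_nle' a, zero_nle' b⟩

lemma omg_eq_singleton_iff' {a b : WithZero S} :
    omg a b = {(0 : WithZero S)} ↔ ∀ c ∈ omg a b, c = 0 := by
  rw [Set.eq_singleton_iff_unique_mem]
  exact ⟨fun h => h.2, fun h => ⟨zero_mem_omg' a b, h⟩⟩

lemma comm0 (hcomm : ∀ e f : S, e * e = e → f * f = f → e * f = f * e)
    (e f : WithZero S) (he : e * e = e) (hf : f * f = f) : e * f = f * e := by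
  rcases eq_or_ne e 0 with rfl | he0
  · simp
  rcases eq_or_ne f 0 with rfl | hf0
  · simp
  obtain ⟨e', rfl⟩ := WithZero.ne_zero_iff_exists.mp he0
  obtain ⟨f', rfl⟩ := WithZero.ne_zero_iff_exists.mp hf0
  have he' : e' * e' = e' := by exact_mod_cast he
  have hf' : f' * f' = f' := by exact_mod_cast hf
  exact_mod_cast hcomm e' f' he' hf'

lemma nle_trans0 (hcomm : ∀ e f : S, e * e = e → f * f = f → e * f = f * e)
    {a b c : WithZero S} (hab : nle a b) (hbc : nle b c) : nle a c := by
  obtain ⟨e, he, rfl⟩ := hab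
  obtain ⟨f, hf, rfl⟩ := hbc
  refine ⟨e * f, ?_, (mul_assoc e f c).symm⟩
  calc e * f * (e * f) = e * (f * e) * f := by simp only [mul_assoc]
    _ = e * (e * f) * f := by rw [comm0 hcomm f e hf he]
    _ = e * e * (f * f) := by simp only [mul_assoc]
    _ = e * f := by rw [he, hf]

lemma ef_mem_omg (hcomm : ∀ e f : S, e * e = e → f * f = f → e * f = f * e)
    {e f : S} (he : e * e = e) (hf : f * f = f) :
    (↑(e * f) : WithZero S) ∈ omg (↑e : WithZero S) (↑f : WithZero S) := by
  have hef : (e * f) * (e * f) = e * f := by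
    calc e * f * (e * f) = e * (f * e) * f := by simp only [mul_assoc]
      _ = e * (e * f) * f := by rw [← hcomm e f he hf]
      _ = e * e * (f * f) := by simp only [mul_assoc]
      _ = e * f := by rw [he, hf]
  have hefe : (e * f) * e = e * f := by
    calc e * f * e = e * (f * e) := by rw [mul_assoc]
      _ = e * (e * f) := by rw [← hcomm e f he hf]
      _ = e * e * f := by rw [mul_assoc]
      _ = e * f := by rw [he]
  have heff : (e * f) * f = e * f := by
    calc e * f * f = e * (f * f) := by rw [mul_assoc]
      _ = e * f := by rw [hf]
  exact ⟨⟨↑(e * f), by exact_mod_cast hef, by exact_mod_cast hefe.symm⟩,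
         ⟨↑(e * f), by exact_mod_cast hef, by exact_mod_cast heff.symm⟩⟩

lemma idem_of_inv {a b : S} (h1 : a * b * a = a) :
    (a * b) * (a * b) = a * b := by
  calc a * b * (a * b) = (a * b * a) * b := by simp only [mul_assoc]
    _ = a * b := by rw [h1]

end ZDG

/-- `diam(Γ(S⁰)) = 1` iff `|S| > 1` and `σ` is the identity relation. -/
theorem stmt15 {S : Type*} [Semigroup S]
    (hinv : ∀ a : S, ∃ b : S, a * b * a = a ∧ b * a * b = b)
    (hcomm : ∀ e f : S, e * e = e → f * f = f → e * f = f * e)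
    (hnz : ¬ ∃ z : S, ∀ x : S, z * x = z ∧ x * z = z) :
    (ZDGraph (0 : WithZero S)).ediam = 1 ↔
      ((∃ a b : S, a ≠ b) ∧ ∀ a b : S, sigmaRel a b → a = b) := by
  constructor
  · intro h
    haveI hnt : Nontrivial (Zx (0 : WithZero S)) :=
      SimpleGraph.nontrivial_of_ediam_ne_zero (by rw [h]; exact one_ne_zero)
    have htop : ZDGraph (0 : WithZero S) = ⊤ := SimpleGraph.ediam_eq_one.mp h
    have hadj : ∀ a b : Zx (0 : WithZero S), (a : WithZero S) ≠ (b : WithZero S) →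
        omg (a : WithZero S) (b : WithZero S) = {(0 : WithZero S)} := by
      intro a b hne
      have hA : (ZDGraph (0 : WithZero S)).Adj a b := by
        rw [htop, SimpleGraph.top_adj]
        exact Subtype.coe_ne_coe.mp hne
      exact hA.2
    obtain ⟨u, v, huv⟩ := exists_pair_ne (Zx (0 : WithZero S))
    have huv' : (u : WithZero S) ≠ (v : WithZero S) := Subtype.coe_ne_coe.mpr huv
    have homguv := hadj u v huv'
    have claimA : ∀ a : WithZero S, a ≠ 0 → a ∈ Zx (0 : WithZero S) := by
      intro a ha
      by_cases h1 : omg a (u : WithZero S) = {(0 : WithZero S)}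
      · exact ⟨ha, u, u.2.1, h1⟩
      by_cases h2 : omg a (v : WithZero S) = {(0 : WithZero S)}
      · exact ⟨ha, v, v.2.1, h2⟩
      exfalso
      rw [omg_eq_singleton_iff'] at h1 h2
      push_neg at h1 h2
      obtain ⟨c, hcmem, hc0⟩ := h1
      obtain ⟨d, hdmem, hd0⟩ := h2
      obtain ⟨hca, hcu⟩ := hcmem
      obtain ⟨hda, hdv⟩ := hdmem
      rcases eq_or_ne c d with rfl | hcd
      · have hm : c ∈ omg (u : WithZero S) (v : WithZero S) := ⟨hcu, hdv⟩
        rw [homguv] at hm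
        exact hc0 (Set.mem_singleton_iff.mp hm)
      · obtain ⟨e, he, hce⟩ := hca
        obtain ⟨f, hf, hdf⟩ := hda
        have he0 : e ≠ 0 := by rintro rfl; exact hc0 (by rw [hce, zero_mul])
        have hf0 : f ≠ 0 := by rintro rfl; exact hd0 (by rw [hdf, zero_mul])
        have hmc : nle (e * f * a) c := ⟨f, hf, by rw [hce, comm0 hcomm e f he hf, mul_assoc]⟩
        have hmd : nle (e * f * a) d := ⟨e, he, by rw [hdf, mul_assoc]⟩
        have hmem : e * f * a ∈ omg (u : WithZero S) (v : WithZero S) :=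
          ⟨nle_trans0 hcomm hmc hcu, nle_trans0 hcomm hmd hdv⟩
        rw [homguv] at hmem
        exact mul_ne_zero (mul_ne_zero he0 hf0) ha (Set.mem_singleton_iff.mp hmem)
    have claimB : ∀ a b : WithZero S, a ≠ 0 → b ≠ 0 → a ≠ b →
        omg a b = {(0 : WithZero S)} := fun a b ha hb hab =>
      hadj ⟨a, claimA a ha⟩ ⟨b, claimA b hb⟩ hab
    have hE : ∀ e f : S, e * e = e → f * f = f → e = f := by
      intro e f he hf
      by_contra hne
      have hB := claimB (↑e) (↑f) WithZero.coe_ne_zero WithZero.coe_ne_zero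
        (fun h' => hne (WithZero.coe_inj.mp h'))
      have hmem := ef_mem_omg hcomm he hf
      rw [hB] at hmem
      exact WithZero.coe_ne_zero (Set.mem_singleton_iff.mp hmem)
    obtain ⟨x, hx⟩ := WithZero.ne_zero_iff_exists.mp u.2.1
    obtain ⟨y, hy⟩ := WithZero.ne_zero_iff_exists.mp v.2.1
    refine ⟨⟨x, y, fun h' => huv' (by rw [← hx, ← hy, h'])⟩, ?_⟩
    rintro a b ⟨e, f, he, hf, hef⟩
    obtain ⟨a', ha1, -⟩ := hinv a
    obtain ⟨b', hb1, -⟩ := hinv b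
    have h1 : a * a' = e := hE _ _ (idem_of_inv ha1) he
    have h2 : b * b' = f := hE _ _ (idem_of_inv hb1) hf
    calc a = e * a := by rw [← h1]; exact ha1.symm
      _ = f * b := hef
      _ = b := by rw [← h2]; exact hb1
  · rintro ⟨⟨x, y, hxy⟩, hσ⟩
    have hE : ∀ e f : S, e * e = e → f * f = f → e = f := fun e f he hf =>
      hσ e f ⟨f, e, hf, he, (hcomm e f he hf).symm⟩
    have hid : ∀ (e a : S), e * e = e → e * a = a := by
      intro e a he
      obtain ⟨a', ha1, -⟩ := hinv a
      rw [← hE (a * a') e (idem_of_inv ha1) he]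
      exact ha1
    have claimB' : ∀ a b : S, a ≠ b →
        omg (↑a : WithZero S) (↑b : WithZero S) = {(0 : WithZero S)} := by
      intro a b hab
      rw [omg_eq_singleton_iff']
      rintro c ⟨⟨e, he, hce⟩, ⟨f, hf, hcf⟩⟩
      by_contra hc0
      have he0 : e ≠ 0 := by rintro rfl; exact hc0 (by rw [hce, zero_mul])
      have hf0 : f ≠ 0 := by rintro rfl; exact hc0 (by rw [hcf, zero_mul])
      obtain ⟨e', rfl⟩ := WithZero.ne_zero_iff_exists.mp he0
      obtain ⟨f', rfl⟩ := WithZero.ne_zero_iff_exists.mp hf0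
      have he' : e' * e' = e' := by exact_mod_cast he
      have hf' : f' * f' = f' := by exact_mod_cast hf
      apply hab
      have hcoe : (↑(e' * a) : WithZero S) = ↑(f' * b) := by
        rw [WithZero.coe_mul, WithZero.coe_mul, ← hce, ← hcf]
      have h2 : e' * a = f' * b := WithZero.coe_inj.mp hcoe
      rw [hid e' a he', hid f' b hf'] at h2
      exact h2
    have hmemZx : ∀ a : S, (↑a : WithZero S) ∈ Zx (0 : WithZero S) := by
      intro a
      by_cases hax : a = x
      · exact ⟨WithZero.coe_ne_zero, ↑y, WithZero.coe_ne_zero, claimB' a y (hax ▸ hxy)⟩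
      · exact ⟨WithZero.coe_ne_zero, ↑x, WithZero.coe_ne_zero, claimB' a x hax⟩
    haveI hnt : Nontrivial (Zx (0 : WithZero S)) :=
      ⟨⟨⟨↑x, hmemZx x⟩, ⟨↑y, hmemZx y⟩,
        fun h => hxy (WithZero.coe_inj.mp (congrArg Subtype.val h))⟩⟩
    rw [SimpleGraph.ediam_eq_one]
    ext a b
    rw [SimpleGraph.top_adj]
    constructor
    · exact fun hA => Subtype.coe_ne_coe.mp hA.1
    · intro hab
      have hab' : (a : WithZero S) ≠ (b : WithZero S) := Subtype.coe_ne_coe.mpr hab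
      refine ⟨hab', ?_⟩
      obtain ⟨a', ha'⟩ := WithZero.ne_zero_iff_exists.mp a.2.1
      obtain ⟨b', hb'⟩ := WithZero.ne_zero_iff_exists.mp b.2.1
      rw [← ha', ← hb']
      exact claimB' a' b' (fun h => hab' (by rw [← ha', ← hb', h]))
end

section
/- Let S be an inverse semigroup without zero element with |S/σ| ≥ 2, and let S⁰ be S with an external zero adjoined. Then gr(Γ(S⁰)) = ∞ if and only if |S/σ| = 2 and at least one of the two σ-classes contains exactly one element of S. -/
open ZDG

section Graph

open SimpleGraph

variable {V : Type*} {G : SimpleGraph V}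

lemma star_acyclic {a : V} (h : ∀ u v : V, G.Adj u v → u = a ∨ v = a) :
    G.IsAcyclic := by
  classical
  have key : ∀ (u : V), u ≠ a → ∀ (c : G.Walk u u), ¬ c.IsCycle := by
    intro u hu c hc
    cases c with
    | nil => exact hc.ne_nil rfl
    | cons h₁ p =>
      rename_i w₁
      cases p with
      | nil => exact G.loopless.irrefl u h₁
      | cons h₂ q =>
        rename_i w₂
        have hw₁ : w₁ = a := (h _ _ h₁).resolve_left hu
        have hw₂ : w₂ ≠ a := fun hh => G.ne_of_adj h₂ (hw₁.trans hh.symm)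
        cases q with
        | nil =>
          have h3 := hc.three_le_length
          simp at h3
        | cons h₃ r =>
          rename_i w₃
          have hw₃ : w₃ = a := (h _ _ h₃).resolve_left hw₂
          have hnd := hc.support_nodup
          simp only [SimpleGraph.Walk.support_cons, List.tail_cons, List.nodup_cons] at hnd
          exact hnd.1 (List.mem_cons_of_mem _ (by rw [hw₁, ← hw₃]; exact r.start_mem_support))
  intro v c hc
  by_cases hv : v = a
  · cases c with
    | nil => exact hc.ne_nil rfl
    | cons h₁ p =>
      rename_i w
      have hw : w ≠ a := fun hh => G.ne_of_adj h₁ (hv.trans hh.symm)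
      have hmem : w ∈ (SimpleGraph.Walk.cons h₁ p).support := by
        simp [SimpleGraph.Walk.support_cons]
      exact key w hw _ (hc.rotate hmem)
  · exact key v hv c hc

lemma not_acyclic_of_triangle {a b c : V} (hab : G.Adj a b) (hbc : G.Adj b c)
    (hca : G.Adj c a) : ¬ G.IsAcyclic := by
  intro hA
  refine hA (SimpleGraph.Walk.cons hab (SimpleGraph.Walk.cons hbc hca.toWalk)) ?_
  simp [SimpleGraph.Walk.isCycle_def, SimpleGraph.Walk.isTrail_def,
    Sym2.eq_iff, hab.ne, hbc.ne, hca.ne, hab.ne', hbc.ne', hca.ne']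

lemma not_acyclic_of_square {a b c d : V} (hab : G.Adj a b) (hbc : G.Adj b c)
    (hcd : G.Adj c d) (hda : G.Adj d a) (hac : a ≠ c) (hbd : b ≠ d) : ¬ G.IsAcyclic := by
  intro hA
  refine hA (SimpleGraph.Walk.cons hab (SimpleGraph.Walk.cons hbc
    (SimpleGraph.Walk.cons hcd hda.toWalk))) ?_
  simp [SimpleGraph.Walk.isCycle_def, SimpleGraph.Walk.isTrail_def,
    Sym2.eq_iff, hab.ne, hbc.ne, hcd.ne, hda.ne, hab.ne', hbc.ne', hcd.ne', hda.ne',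
    hac, hac.symm, hbd, hbd.symm]

end Graph

namespace ZDG

variable {S : Type*} [Semigroup S]

lemma sig_refl (hinv : ∀ a : S, ∃ b : S, a * b * a = a ∧ b * a * b = b) (a : S) :
    sigmaRel a a := by
  obtain ⟨b, h1, _⟩ := hinv a
  have idem : (a * b) * (a * b) = a * b := by rw [← mul_assoc, h1]
  exact ⟨a * b, a * b, idem, idem, rfl⟩

lemma sig_symm {a b : S} (h : sigmaRel a b) : sigmaRel b a := by
  obtain ⟨e, f, he, hf, hef⟩ := h
  exact ⟨f, e, hf, he, hef.symm⟩

lemma sig_trans (hcomm : ∀ e f : S, e * e = e → f * f = f → e * f = f * e)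
    {a b c : S} (h1 : sigmaRel a b) (h2 : sigmaRel b c) : sigmaRel a c := by
  obtain ⟨e, f, he, hf, hef⟩ := h1
  obtain ⟨g, k, hg, hk, hgk⟩ := h2
  refine ⟨g * e, f * k, ?_, ?_, ?_⟩
  · calc g * e * (g * e) = g * ((e * g) * e) := by
          rw [mul_assoc g e (g * e), ← mul_assoc e g e]
      _ = g * ((g * e) * e) := by rw [hcomm e g he hg]
      _ = g * (g * (e * e)) := by rw [mul_assoc g e e]
      _ = (g * g) * (e * e) := by rw [← mul_assoc]
      _ = g * e := by rw [hg, he]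
  · calc f * k * (f * k) = f * ((k * f) * k) := by
          rw [mul_assoc f k (f * k), ← mul_assoc k f k]
      _ = f * ((f * k) * k) := by rw [hcomm k f hk hf]
      _ = f * (f * (k * k)) := by rw [mul_assoc f k k]
      _ = (f * f) * (k * k) := by rw [← mul_assoc]
      _ = f * k := by rw [hf, hk]
  · calc g * e * a = g * (f * b) := by rw [mul_assoc, hef]
      _ = (f * g) * b := by rw [← mul_assoc, hcomm g f hg hf]
      _ = f * (k * c) := by rw [mul_assoc, hgk]
      _ = f * k * c := by rw [← mul_assoc]

lemma nle_zero (x : WithZero S) : nle (0 : WithZero S) x :=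
  ⟨0, by simp, by simp⟩

lemma omg_singleton_iff (x y : S) :
    omg (x : WithZero S) (y : WithZero S) = {(0 : WithZero S)} ↔ ¬ sigmaRel x y := by
  constructor
  · intro h hs
    obtain ⟨e, f, he, hf, hef⟩ := hs
    have hm : ((e * x : S) : WithZero S) ∈ omg (x : WithZero S) (y : WithZero S) := by
      refine ⟨⟨(e : WithZero S), ?_, ?_⟩, ⟨(f : WithZero S), ?_, ?_⟩⟩
      · rw [← WithZero.coe_mul, he]
      · rw [← WithZero.coe_mul]
      · rw [← WithZero.coe_mul, hf]
      · rw [← WithZero.coe_mul, hef, WithZero.coe_mul]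
    rw [h] at hm
    exact WithZero.coe_ne_zero hm
  · intro h
    ext c
    simp only [Set.mem_singleton_iff]
    constructor
    · rintro ⟨⟨e, he, hce⟩, ⟨f, hf, hcf⟩⟩
      by_contra hc0
      have he0 : e ≠ 0 := by rintro rfl; rw [zero_mul] at hce; exact hc0 hce
      have hf0 : f ≠ 0 := by rintro rfl; rw [zero_mul] at hcf; exact hc0 hcf
      obtain ⟨e', rfl⟩ := WithZero.ne_zero_iff_exists.mp he0
      obtain ⟨f', rfl⟩ := WithZero.ne_zero_iff_exists.mp hf0
      apply h
      refine ⟨e', f', ?_, ?_, ?_⟩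
      · have : ((e' * e' : S) : WithZero S) = (e' : WithZero S) := by
          rw [WithZero.coe_mul]; exact he
        exact_mod_cast this
      · have : ((f' * f' : S) : WithZero S) = (f' : WithZero S) := by
          rw [WithZero.coe_mul]; exact hf
        exact_mod_cast this
      · have : ((e' * x : S) : WithZero S) = ((f' * y : S) : WithZero S) := by
          rw [WithZero.coe_mul, WithZero.coe_mul, ← hce, ← hcf]
        exact_mod_cast this
    · rintro rfl
      exact ⟨nle_zero _, nle_zero _⟩

lemma ZDGraph_adj {z : S} {u w : Zx z} :
    (ZDGraph z).Adj u w ↔ ((u : S) ≠ (w : S) ∧ omg (u : S) (w : S) = {z}) := Iff.rfl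

end ZDG

/-- if `|S/σ| ≥ 2`, then `gr(Γ(S⁰)) = ∞` iff `|S/σ| = 2` and at least
one of the two `σ`-classes contains exactly one element of `S`. -/
theorem stmt18 {S : Type*} [Semigroup S]
    (hinv : ∀ a : S, ∃ b : S, a * b * a = a ∧ b * a * b = b)
    (hcomm : ∀ e f : S, e * e = e → f * f = f → e * f = f * e)
    (hnz : ¬ ∃ z : S, ∀ x : S, z * x = z ∧ x * z = z)
    (hσ2 : ∃ a b : S, ¬ sigmaRel a b) :
    (ZDGraph (0 : WithZero S)).egirth = ⊤ ↔
      ((∃ a b : S, ¬ sigmaRel a b ∧ ∀ c : S, sigmaRel c a ∨ sigmaRel c b) ∧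
        ∃ a : S, ∀ b : S, sigmaRel b a → b = a) := by
  classical
  have srefl : ∀ a : S, sigmaRel a a := sig_refl hinv
  have ssymm : ∀ {a b : S}, sigmaRel a b → sigmaRel b a := fun h => sig_symm h
  have strans : ∀ {a b c : S}, sigmaRel a b → sigmaRel b c → sigmaRel a c :=
    fun h1 h2 => sig_trans hcomm h1 h2
  have hpartner : ∀ s : S, ∃ t : S, ¬ sigmaRel s t := by
    obtain ⟨a, b, hab⟩ := hσ2
    intro s
    by_cases h : sigmaRel s a
    · exact ⟨b, fun hsb => hab (strans (ssymm h) hsb)⟩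
    · exact ⟨a, h⟩
  have hmem : ∀ s : S, (s : WithZero S) ∈ Zx (0 : WithZero S) := by
    intro s
    obtain ⟨t, ht⟩ := hpartner s
    exact ⟨WithZero.coe_ne_zero, (t : WithZero S), WithZero.coe_ne_zero,
      (omg_singleton_iff s t).mpr ht⟩
  let v : S → Zx (0 : WithZero S) := fun s => ⟨(s : WithZero S), hmem s⟩
  have hadj : ∀ s t : S, (ZDGraph (0 : WithZero S)).Adj (v s) (v t) ↔ ¬ sigmaRel s t := by
    intro s t
    rw [ZDGraph_adj]
    constructor
    · rintro ⟨-, h2⟩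
      exact (omg_singleton_iff s t).mp h2
    · intro h
      refine ⟨?_, (omg_singleton_iff s t).mpr h⟩
      intro hst
      exact h ((WithZero.coe_inj.mp hst) ▸ srefl s)
  rw [SimpleGraph.egirth_eq_top]
  constructor
  · intro hA
    constructor
    · obtain ⟨a, b, hab⟩ := hσ2
      refine ⟨a, b, hab, ?_⟩
      intro c
      by_contra hcon
      push_neg at hcon
      obtain ⟨h1, h2⟩ := hcon
      exact not_acyclic_of_triangle ((hadj a b).mpr hab)
        ((hadj b c).mpr (fun h => h2 (ssymm h)))
        ((hadj c a).mpr h1) hA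
    · by_contra hno
      push_neg at hno
      obtain ⟨a, b, hab⟩ := hσ2
      obtain ⟨a', ha', hane⟩ := hno a
      obtain ⟨b', hb', hbne⟩ := hno b
      have h1 : ¬ sigmaRel b a' := fun h => hab (ssymm (strans h ha'))
      have h2 : ¬ sigmaRel a' b' := fun h => hab (strans (ssymm ha') (strans h hb'))
      have h3 : ¬ sigmaRel b' a := fun h => hab (strans (ssymm h) hb')
      refine not_acyclic_of_square ((hadj a b).mpr hab) ((hadj b a').mpr h1)
        ((hadj a' b').mpr h2) ((hadj b' a).mpr h3) ?_ ?_ hA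
      · intro hh
        exact hane (WithZero.coe_inj.mp (congrArg Subtype.val hh)).symm
      · intro hh
        exact hbne (WithZero.coe_inj.mp (congrArg Subtype.val hh)).symm
  · rintro ⟨⟨a₀, b₀, hab, hall⟩, a, ha⟩
    obtain ⟨r, har, hcls⟩ : ∃ r : S, ¬ sigmaRel a r ∧ ∀ z : S, sigmaRel z a ∨ sigmaRel z r := by
      rcases hall a with h | h
      · refine ⟨b₀, fun hh => hab (strans (ssymm h) hh), fun z => ?_⟩
        rcases hall z with hz | hz
        · exact Or.inl (strans hz (ssymm h))
        · exact Or.inr hz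
      · refine ⟨a₀, fun hh => hab (ssymm (strans (ssymm h) hh)), fun z => ?_⟩
        rcases hall z with hz | hz
        · exact Or.inr hz
        · exact Or.inl (strans hz (ssymm h))
    apply star_acyclic (a := v a)
    intro u w huw
    rw [ZDGraph_adj] at huw
    obtain ⟨h1, h2⟩ := huw
    obtain ⟨x, hx⟩ := WithZero.ne_zero_iff_exists.mp u.2.1
    obtain ⟨y, hy⟩ := WithZero.ne_zero_iff_exists.mp w.2.1
    have hxy : ¬ sigmaRel x y := by
      apply (omg_singleton_iff x y).mp
      rw [hx, hy]
      exact h2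
    have hxa : x = a ∨ y = a := by
      by_contra hcon
      push_neg at hcon
      apply hxy
      have hx' : sigmaRel x r := (hcls x).resolve_left (fun h => hcon.1 (ha x h))
      have hy' : sigmaRel y r := (hcls y).resolve_left (fun h => hcon.2 (ha y h))
      exact strans hx' (ssymm hy')
    rcases hxa with rfl | rfl
    · left
      exact Subtype.ext hx.symm
    · right
      exact Subtype.ext hy.symm
end
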